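/- Let R be a commutative Noetherian ring and 𝔞 an ideal of R. Let 0 → L → M → N → 0 be a short exact sequence of R-modules. If any two of L, M, N are 𝔞-cofinite, then so is the third. -/

import Mathlib

/-
The Hom-complexes `Hom(P•, -)` out of a projective resolution `P•` of `R/𝔞` turn the short exact
sequence `0 → L → M → N → 0` into a short exact sequence of cochain complexes, whose long exact
cohomology sequence relates the modules `Ext^i(R/𝔞, -)` of `L`, `M` and `N`. Over a Noetherian
ring finite generation passes to submodules and extensions, so along that long exact sequence any
two of the three families of `Ext` modules being finitely generated forces the third. The support
condition is the familiar `Supp M = Supp L ∪ Supp N`.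
-/

open CategoryTheory CategoryTheory.Limits Opposite

noncomputable section

variable {R : Type} [CommRing R]

/-- The quotient functor `p ↦ M ⧸ p` on the (order) category of submodules of `M`. -/
def submoduleQuotFunctor (M : Type) [AddCommGroup M] [Module R M] :
    Submodule R M ⥤ ModuleCat R where
  obj p := ModuleCat.of R (M ⧸ p)
  map {p q} w := ModuleCat.ofHom (Submodule.mapQ p q LinearMap.id (fun _ hx => w.down.down hx))
  map_id := fun p => by apply ModuleCat.hom_ext; apply Submodule.linearMap_qext; rfl
  map_comp := fun f g => by apply ModuleCat.hom_ext; apply Submodule.linearMap_qext; rfl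

/-- The directed system `n ↦ 𝔞ⁿM` of submodules of `M` (indexed by `ℕᵒᵖ`,
as these submodules are decreasing in `n`). -/
def powersSubmoduleDiagram (𝔞 : Ideal R) (M : Type) [AddCommGroup M] [Module R M] :
    ℕᵒᵖ ⥤ Submodule R M where
  obj t := 𝔞 ^ (unop t) • ⊤
  map w := homOfLE (Submodule.smul_mono (Ideal.pow_le_pow_right w.unop.down.down) le_rfl)

/-- The directed system `n ↦ M/𝔞ⁿM`, the maps being the natural surjections
`M/𝔞ⁿM → M/𝔞ᵐM` for `m ≤ n`. -/
def quotPowersDiagram (𝔞 : Ideal R) (M : Type) [AddCommGroup M] [Module R M] :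
    ℕᵒᵖ ⥤ ModuleCat R :=
  powersSubmoduleDiagram 𝔞 M ⋙ submoduleQuotFunctor M

/-- The generalized local cohomology functor
`N ↦ H^i_𝔞(M, N) = colim_n Ext^i(M/𝔞ⁿM, N)`. -/
def genLocalCohomology (𝔞 : Ideal R) (M : Type) [AddCommGroup M] [Module R M] (i : ℕ) :
    ModuleCat R ⥤ ModuleCat R :=
  colimit ((quotPowersDiagram 𝔞 M).op ⋙ Ext R (ModuleCat R) i)

/-- `X` is `𝔞`-cofinite if `Supp X ⊆ V(𝔞)` and `Ext^i(R/𝔞, X)` is finitely generated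
for all `i ≥ 0`. -/
def IsCofinite (𝔞 : Ideal R) (X : Type) [AddCommGroup X] [Module R X] : Prop :=
  Module.support R X ⊆ PrimeSpectrum.zeroLocus (𝔞 : Set R) ∧
    ∀ i : ℕ, Module.Finite R
      (((Ext R (ModuleCat R) i).obj (op (ModuleCat.of R (R ⧸ 𝔞)))).obj (ModuleCat.of R X))

/-- `M` has projective dimension at most `n`, i.e. `Ext^i(M, -) = 0` for all `i > n`. -/
def HasProjDimLE (M : Type) [AddCommGroup M] [Module R M] (n : ℕ) : Prop :=
  ∀ i : ℕ, n < i → ∀ X : ModuleCat R,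
    Subsingleton (((Ext R (ModuleCat R) i).obj (op (ModuleCat.of R M))).obj X)

/-- `M` has finite projective dimension. -/
def HasFiniteProjDim (M : Type) [AddCommGroup M] [Module R M] : Prop :=
  ∃ n : ℕ, HasProjDimLE (R := R) M n

lemma Module.Finite.of_exact_of_isNoetherianRing {R A B C : Type*} [CommRing R]
    [IsNoetherianRing R] [AddCommGroup A] [Module R A] [AddCommGroup B] [Module R B]
    [AddCommGroup C] [Module R C] [Module.Finite R A] [Module.Finite R C]
    {f : A →ₗ[R] B} {g : B →ₗ[R] C} (hfg : Function.Exact f g) : Module.Finite R B := by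
  refine ⟨Submodule.fg_of_fg_map_of_fg_inf_ker g (IsNoetherian.noetherian _) ?_⟩
  rw [top_inf_eq, hfg.linearMap_ker_eq]
  exact Module.Finite.iff_fg.mp (Module.Finite.range f)

lemma CochainComplex.mono_homologyMap_zero {C : Type*} [Category C] [Abelian C]
    {K L : CochainComplex C ℕ} (φ : K ⟶ L) [Mono (φ.f 0)] :
    Mono (HomologicalComplex.homologyMap φ 0) := by
  have := K.isIso_homologyπ 0 0 CochainComplex.prev_nat_zero (K.shape _ _ (by simp))
  have := L.isIso_homologyπ 0 0 CochainComplex.prev_nat_zero (L.shape _ _ (by simp))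
  have : Mono (HomologicalComplex.cyclesMap φ 0) :=
    mono_of_mono_fac (HomologicalComplex.cyclesMap_i φ 0)
  rw [← IsIso.inv_hom_id_assoc (K.homologyπ 0) (HomologicalComplex.homologyMap φ 0),
    HomologicalComplex.homologyπ_naturality]
  infer_instance

section LinearYoneda

variable (R : Type*) [Ring R] {C : Type*} [Category C] [Abelian C] [Linear R C]

def ChainComplex.linearYonedaMap (X : ChainComplex C ℕ) {Y Z : C} (φ : Y ⟶ Z) :
    X.linearYonedaObj R Y ⟶ X.linearYonedaObj R Z where
  f n := ModuleCat.ofHom (Linear.rightComp R (X.X n) φ)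
  comm' i j _ := by
    ext (x : X.X i ⟶ Y)
    exact (Category.assoc (X.d j i) x φ).symm

def ChainComplex.linearYonedaShortComplex (X : ChainComplex C ℕ) (S : ShortComplex C) :
    ShortComplex (CochainComplex (ModuleCat R) ℕ) :=
  ShortComplex.mk (X.linearYonedaMap R S.f) (X.linearYonedaMap R S.g) (by
    ext n (x : X.X n ⟶ S.X₁)
    exact (Category.assoc x S.f S.g).trans (by rw [S.zero, Limits.comp_zero]; rfl))

variable {R} {S : ShortComplex C} (hS : S.ShortExact)
include hS

lemma CategoryTheory.ShortComplex.ShortExact.map_linearCoyoneda_obj (P : C) [Projective P] :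
    (S.map ((linearCoyoneda R C).obj (Opposite.op P))).ShortExact := by
  have := hS.mono_f
  have := hS.epi_g
  have : Mono (S.map ((linearCoyoneda R C).obj (Opposite.op P))).f := by
    rw [ModuleCat.mono_iff_injective]
    exact fun x y hxy => (cancel_mono S.f).1 hxy
  have : Epi (S.map ((linearCoyoneda R C).obj (Opposite.op P))).g := by
    rw [ModuleCat.epi_iff_surjective]
    exact fun (x : P ⟶ S.X₃) => ⟨Projective.factorThru x S.g, Projective.factorThru_comp x S.g⟩
  refine ⟨?_⟩
  rw [ShortComplex.moduleCat_exact_iff]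
  exact fun (x : P ⟶ S.X₂) hx => ⟨hS.exact.lift x hx, hS.exact.lift_f x hx⟩

lemma CategoryTheory.ShortComplex.ShortExact.linearYonedaShortComplex
    (X : ChainComplex C ℕ) [∀ n, Projective (X.X n)] :
    (X.linearYonedaShortComplex R S).ShortExact :=
  HomologicalComplex.shortExact_of_degreewise_shortExact _ fun n =>
    hS.map_linearCoyoneda_obj (X.X n)

end LinearYoneda

def HasFiniteExt (Z Y : ModuleCat R) : Prop :=
  ∀ i : ℕ, Module.Finite R (((Ext R (ModuleCat R) i).obj (op Z)).obj Y)

lemma CategoryTheory.ProjectiveResolution.hasFiniteExt_iff {Z : ModuleCat R}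
    (P : ProjectiveResolution Z) (Y : ModuleCat R) :
    HasFiniteExt Z Y ↔ ∀ i, Module.Finite R ((P.complex.linearYonedaObj R Y).homology i) :=
  forall_congr' fun i => Module.Finite.equiv_iff (P.isoExt i Y).toLinearEquiv

namespace CategoryTheory.ShortComplex.ShortExact

variable [IsNoetherianRing R]

section Homology

variable {S : ShortComplex (CochainComplex (ModuleCat R) ℕ)} (hS : S.ShortExact)
include hS

lemma finite_homology_X₂ (h₁ : ∀ i, Module.Finite R (S.X₁.homology i))
    (h₃ : ∀ i, Module.Finite R (S.X₃.homology i)) (i : ℕ) :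
    Module.Finite R (S.X₂.homology i) :=
  Module.Finite.of_exact_of_isNoetherianRing
    ((moduleCat_exact_iff_function_exact _).mp (hS.homology_exact₂ i))

lemma finite_homology_X₃ (h₁ : ∀ i, Module.Finite R (S.X₁.homology i))
    (h₂ : ∀ i, Module.Finite R (S.X₂.homology i)) (i : ℕ) :
    Module.Finite R (S.X₃.homology i) :=
  Module.Finite.of_exact_of_isNoetherianRing
    ((moduleCat_exact_iff_function_exact _).mp (hS.homology_exact₃ i (i + 1) rfl))

lemma finite_homology_X₁ (h₂ : ∀ i, Module.Finite R (S.X₂.homology i))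
    (h₃ : ∀ i, Module.Finite R (S.X₃.homology i)) :
    ∀ i, Module.Finite R (S.X₁.homology i)
  | 0 => by
    have := hS.mono_f
    have := CochainComplex.mono_homologyMap_zero S.f
    exact Module.Finite.of_injective (HomologicalComplex.homologyMap S.f 0).hom
      ((ModuleCat.mono_iff_injective _).mp this)
  | i + 1 => Module.Finite.of_exact_of_isNoetherianRing
    ((moduleCat_exact_iff_function_exact _).mp (hS.homology_exact₁ i (i + 1) rfl))

end Homology

variable {S : ShortComplex (ModuleCat R)} (hS : S.ShortExact) {Z : ModuleCat R}
include hS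

lemma hasFiniteExt_X₁ (h₂ : HasFiniteExt Z S.X₂) (h₃ : HasFiniteExt Z S.X₃) :
    HasFiniteExt Z S.X₁ := by
  obtain ⟨P⟩ : Nonempty (ProjectiveResolution Z) := HasProjectiveResolution.out
  rw [P.hasFiniteExt_iff] at *
  exact (hS.linearYonedaShortComplex P.complex).finite_homology_X₁ h₂ h₃

lemma hasFiniteExt_X₂ (h₁ : HasFiniteExt Z S.X₁) (h₃ : HasFiniteExt Z S.X₃) :
    HasFiniteExt Z S.X₂ := by
  obtain ⟨P⟩ : Nonempty (ProjectiveResolution Z) := HasProjectiveResolution.out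
  rw [P.hasFiniteExt_iff] at *
  exact (hS.linearYonedaShortComplex P.complex).finite_homology_X₂ h₁ h₃

lemma hasFiniteExt_X₃ (h₁ : HasFiniteExt Z S.X₁) (h₂ : HasFiniteExt Z S.X₂) :
    HasFiniteExt Z S.X₃ := by
  obtain ⟨P⟩ : Nonempty (ProjectiveResolution Z) := HasProjectiveResolution.out
  rw [P.hasFiniteExt_iff] at *
  exact (hS.linearYonedaShortComplex P.complex).finite_homology_X₃ h₁ h₂

end CategoryTheory.ShortComplex.ShortExact

/-- Let `R` be a commutative Noetherian ring and `𝔞` an ideal of `R`. Let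
`0 → L → M → N → 0` be a short exact sequence of `R`-modules. If any two of `L`, `M`, `N` are
`𝔞`-cofinite, then so is the third. -/
theorem isCofinite_two_of_three
    (R : Type) [CommRing R] [IsNoetherianRing R] (𝔞 : Ideal R)
    (L M N : Type) [AddCommGroup L] [Module R L] [AddCommGroup M] [Module R M]
    [AddCommGroup N] [Module R N]
    (f : L →ₗ[R] M) (g : M →ₗ[R] N)
    (hf : Function.Injective f) (hg : Function.Surjective g) (hfg : Function.Exact f g) :
    (IsCofinite 𝔞 L → IsCofinite 𝔞 M → IsCofinite 𝔞 N) ∧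
    (IsCofinite 𝔞 L → IsCofinite 𝔞 N → IsCofinite 𝔞 M) ∧
    (IsCofinite 𝔞 M → IsCofinite 𝔞 N → IsCofinite 𝔞 L) := by
  have hS : (ShortComplex.moduleCatMk f g hfg.linearMap_comp_eq_zero).ShortExact :=
    ModuleCat.shortComplex_shortExact _ hfg hf hg
  refine ⟨fun hL hM => ⟨?_, hS.hasFiniteExt_X₃ hL.2 hM.2⟩,
    fun hL hN => ⟨?_, hS.hasFiniteExt_X₂ hL.2 hN.2⟩,
    fun hM hN => ⟨?_, hS.hasFiniteExt_X₁ hM.2 hN.2⟩⟩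
  · exact (Module.support_subset_of_surjective g hg).trans hM.1
  · rw [Module.support_of_exact hfg hf hg]
    exact Set.union_subset hL.1 hN.1
  · exact (Module.support_subset_of_injective f hf).trans hM.1
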